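/- Let n ≥ 2 and let w : ℕ → ℤ be a zigzag sequence of length n, i.e. w 0 = 0, w n = 0, and |w (i+1) - w i| = 2 for every i < n. Then the sum ∑_{i=0}^{n} w i equals (∑_{i thick} (w i)^2 - ∑_{i thin} (w i)^2) / 2, where an index i with 0 < i < n is called thick if w (i-1) < w i and w i > w (i+1), and is called thin if w (i-1) > w i and w i < w (i+1). (This is the combinatorial core of the width formula w(K) = 2·∑ a_{i_l}^2 - 2·∑ b_{j_l}^2, where the thick values are 2a_{i_l} and the thin values are 2b_{j_l}.) -/
import Mathlib


/-- Combinatorial core of the width formula (Scharlemann–Schultens):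
for a zigzag sequence `w` of length `n`, the total sum equals half of
(sum of squares of thick values minus sum of squares of thin values). -/
theorem zigzag_width_formula (n : ℕ) (hn : 2 ≤ n) (w : ℕ → ℤ)
    (h0 : w 0 = 0) (hend : w n = 0)
    (hstep : ∀ i < n, |w (i + 1) - w i| = 2) :
    ∑ i ∈ Finset.range (n + 1), w i =
      ((∑ i ∈ (Finset.range (n + 1)).filter
          (fun i => 0 < i ∧ i < n ∧ w (i - 1) < w i ∧ w (i + 1) < w i), (w i) ^ 2) -
       (∑ i ∈ (Finset.range (n + 1)).filter
          (fun i => 0 < i ∧ i < n ∧ w i < w (i - 1) ∧ w i < w (i + 1)), (w i) ^ 2)) / 2 := by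
  set S := ∑ i ∈ Finset.range (n + 1), w i with hS
  set T1 := ∑ i ∈ (Finset.range (n + 1)).filter
      (fun i => 0 < i ∧ i < n ∧ w (i - 1) < w i ∧ w (i + 1) < w i), (w i) ^ 2 with hT1
  set T2 := ∑ i ∈ (Finset.range (n + 1)).filter
      (fun i => 0 < i ∧ i < n ∧ w i < w (i - 1) ∧ w i < w (i + 1)), (w i) ^ 2 with hT2
  set g : ℕ → ℤ := fun j => w (j + 1) - w j with hg
  -- Step 1: the signed telescoping sum equals 8S
  have step1 : ∑ j ∈ Finset.range n, g j * ((w (j+1))^2 - (w j)^2) = 8 * S := by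
    have e1 : ∀ j ∈ Finset.range n, g j * ((w (j+1))^2 - (w j)^2) = 4 * (w j + w (j+1)) := by
      intro j hj
      rw [Finset.mem_range] at hj
      have h := hstep j hj
      rcases (abs_eq (by norm_num : (0:ℤ) ≤ 2)).mp h with h | h
      · have hh : w (j+1) = w j + 2 := by omega
        simp only [hg, hh]; ring
      · have hh : w (j+1) = w j - 2 := by omega
        simp only [hg, hh]; ring
    rw [Finset.sum_congr rfl e1]
    have a1 : ∑ j ∈ Finset.range n, w j = S - w n := by
      rw [hS, Finset.sum_range_succ]; ring
    have a2 : ∑ j ∈ Finset.range n, w (j+1) = S - w 0 := by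
      rw [hS, Finset.sum_range_succ']; ring
    have e2 : ∑ j ∈ Finset.range n, (w j + w (j+1)) = 2 * S := by
      rw [Finset.sum_add_distrib, a1, a2, h0, hend]; ring
    rw [← Finset.mul_sum, e2]; ring
  -- Step 2: Abel summation
  have step2 : ∑ j ∈ Finset.range n, g j * ((w (j+1))^2 - (w j)^2)
      = ∑ j ∈ Finset.range (n+1), (g (j-1) - g j) * (w j)^2 := by
    have split : ∀ j ∈ Finset.range n, g j * ((w (j+1))^2 - (w j)^2)
        = g j * (w (j+1))^2 - g j * (w j)^2 := by intro j _; ring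
    rw [Finset.sum_congr rfl split, Finset.sum_sub_distrib]
    have a1 : ∑ j ∈ Finset.range n, g j * (w (j+1))^2
        = ∑ j ∈ Finset.range (n+1), g (j-1) * (w j)^2 := by
      rw [Finset.sum_range_succ' (fun j => g (j-1) * (w j)^2) n]
      simp [h0]
    have a2 : ∑ j ∈ Finset.range n, g j * (w j)^2
        = ∑ j ∈ Finset.range (n+1), g j * (w j)^2 := by
      rw [Finset.sum_range_succ]
      simp [hend]
    rw [a1, a2, ← Finset.sum_sub_distrib]
    exact Finset.sum_congr rfl (fun j _ => by ring)
  -- Step 3: pointwise identification of thick/thin contributions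
  have step3 : ∀ j ∈ Finset.range (n+1),
      (g (j-1) - g j) * (w j)^2 =
        (if 0 < j ∧ j < n ∧ w (j-1) < w j ∧ w (j+1) < w j then 4 * (w j)^2 else 0)
      - (if 0 < j ∧ j < n ∧ w j < w (j-1) ∧ w j < w (j+1) then 4 * (w j)^2 else 0) := by
    intro j hj
    rw [Finset.mem_range, Nat.lt_succ_iff] at hj
    by_cases hj0 : j = 0
    · subst hj0; simp [hg]
    by_cases hjn : j = n
    · subst hjn; simp [hend]
    have hjpos : 0 < j := Nat.pos_of_ne_zero hj0
    have hjltn : j < n := lt_of_le_of_ne hj hjn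
    have hjj : j - 1 + 1 = j := Nat.succ_pred_eq_of_pos hjpos
    have h1 : |w j - w (j-1)| = 2 := by
      have h := hstep (j-1) (by omega)
      rwa [hjj] at h
    have h2 := hstep j hjltn
    have hgd : g (j-1) - g j = 2 * w j - w (j-1) - w (j+1) := by
      simp only [hg]
      rw [hjj]; ring
    rw [hgd]
    rcases (abs_eq (by norm_num : (0:ℤ) ≤ 2)).mp h1 with a | a <;>
      rcases (abs_eq (by norm_num : (0:ℤ) ≤ 2)).mp h2 with b | b
    · rw [if_neg (by omega), if_neg (by omega)]
      have e : 2 * w j - w (j-1) - w (j+1) = 0 := by omega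
      rw [e]; ring
    · rw [if_pos ⟨hjpos, hjltn, by omega, by omega⟩, if_neg (by omega)]
      have e : 2 * w j - w (j-1) - w (j+1) = 4 := by omega
      rw [e]; ring
    · rw [if_neg (by omega), if_pos ⟨hjpos, hjltn, by omega, by omega⟩]
      have e : 2 * w j - w (j-1) - w (j+1) = -4 := by omega
      rw [e]; ring
    · rw [if_neg (by omega), if_neg (by omega)]
      have e : 2 * w j - w (j-1) - w (j+1) = 0 := by omega
      rw [e]; ring
  -- Step 4: sum up step 3
  have step4 : ∑ j ∈ Finset.range (n+1), (g (j-1) - g j) * (w j)^2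
      = 4 * T1 - 4 * T2 := by
    rw [Finset.sum_congr rfl step3, Finset.sum_sub_distrib, hT1, hT2,
      Finset.mul_sum, Finset.mul_sum, Finset.sum_filter, Finset.sum_filter]
  have key : T1 - T2 = 2 * S := by
    rw [step2, step4] at step1
    linarith
  rw [key]
  omega
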